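/- arXiv:1807.07786 — 4 statements merged into one kernel-verified Lean document; each statement's English description precedes it below -/
import Mathlib

section
/- The algebra morphism r: ℤG → ℤ⟨⟨x₁,…,xₙ⟩⟩ induced by the group morphism gᵢ ↦ 1+xᵢ (G the free group on g₁,…,gₙ, target the ring of noncommutative formal power series over ℤ) is injective. -/
/-!
Write `∂ᵢ` for the right-handed Fox derivatives and `ε` for the augmentation. Every `f ∈ ℤG`
satisfies `f = ε f + ∑ᵢ (gᵢ - 1) ∂ᵢ f`, and the coefficient of `xᵢ w` in `r f` is the
coefficient of `w` in `r (∂ᵢ f)`. So if `r f = 0`, then `ε f = 0` and `r (∂ᵢ f) = 0`, and it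
suffices to show `∂ᵢ f = 0`, by induction on the maximal length `M` of the words in the support
of `f`. The derivative `∂ᵢ` need not lower this length: a term `c gᵢ⁻¹ u` of length `M` of `f`
reappears in `∂ᵢ f` as `-c gᵢ⁻¹ u`. But these are the only terms of length `M` in `∂ᵢ f`, so
`gᵢ ∂ᵢ f` still has length at most `M` and its terms of length `M` begin with a positive letter.
All Fox derivatives of such an element have length `< M`, so they vanish by induction, and then
`gᵢ ∂ᵢ f = 0` by the first formula.
-/

noncomputable section

/-- The coefficient, at the word `w` in the (noncommuting) variables `x₁, …, xₙ`, of the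
Magnus expansion of a reduced group word `l` in the free group on `g₁, …, gₙ`, obtained by
substituting `gᵢ ↦ 1 + xᵢ` (and `gᵢ⁻¹ ↦ (1 + xᵢ)⁻¹ = 1 - xᵢ(1 + xᵢ)⁻¹`). -/
def Ecoef {n : ℕ} : List (Fin n × Bool) → List (Fin n) → ℤ
  | [], [] => 1
  | [], _ :: _ => 0
  | _ :: rest, [] => Ecoef rest []
  | (i, true) :: rest, j :: w =>
      Ecoef rest (j :: w) + (if j = i then Ecoef rest w else 0)
  | (i, false) :: rest, j :: w =>
      Ecoef rest (j :: w) - (if j = i then Ecoef ((i, false) :: rest) w else 0)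
  termination_by l w => (w.length, l.length)

/-- The coefficientwise form of the algebra morphism
`r : ℤG → ℤ⟨⟨x₁,…,xₙ⟩⟩` induced by `gᵢ ↦ 1 + xᵢ`: the element `f` of the group ring is
sent to the family of coefficients of the noncommutative formal power series `r f`,
indexed by words in the variables. -/
def magnus (n : ℕ) (f : MonoidAlgebra ℤ (FreeGroup (Fin n))) : List (Fin n) → ℤ :=
  fun w => f.coeff.sum fun g z => z * Ecoef g.toWord w

namespace FreeGroup

open MonoidAlgebra (single)
open scoped MonoidAlgebra

section
variable {α R : Type*} [Semiring R]

theorem single_of_mul_single_mk_cons_false (j : α) (l : List (α × Bool)) :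
    (single (of j) 1 * single (mk ((j, false) :: l)) 1 : R[FreeGroup α]) = single (mk l) 1 := by
  rw [MonoidAlgebra.single_mul_single, one_mul, of, mul_mk]
  exact congrArg (single · 1) (Quot.sound Red.Step.cons_not)

theorem single_mk_cons_true (j : α) (l : List (α × Bool)) :
    (single (mk ((j, true) :: l)) 1 : R[FreeGroup α]) = single (of j) 1 * single (mk l) 1 := by
  rw [MonoidAlgebra.single_mul_single, one_mul, of, mul_mk]
  rfl
end

variable {α R : Type*} [DecidableEq α] [CommRing R]

/-- The right-handed Fox derivative `∂ᵢ` of a (not necessarily reduced) word, determined by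
`∂ᵢ (u v) = (∂ᵢ u) v + ∂ᵢ v` and `∂ᵢ gⱼ = δᵢⱼ`, hence `∂ᵢ gᵢ⁻¹ = -gᵢ⁻¹`. -/
def foxDerivList (i : α) : List (α × Bool) → R[FreeGroup α]
  | [] => 0
  | (j, true) :: l => (if i = j then single (mk l) 1 else 0) + foxDerivList i l
  | (j, false) :: l => (if i = j then -single (mk ((j, false) :: l)) 1 else 0) + foxDerivList i l

theorem single_mk_eq_one_add_sum_foxDerivList [Fintype α] (l : List (α × Bool)) :
    (single (mk l) 1 : R[FreeGroup α]) = 1 + ∑ i, (single (of i) 1 - 1) * foxDerivList i l := by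
  induction l with
  | nil => simp [foxDerivList, ← one_eq_mk, MonoidAlgebra.one_def]
  | cons a l ih =>
    obtain ⟨j, _ | _⟩ := a
    · simp only [foxDerivList, mul_add, Finset.sum_add_distrib, mul_ite, mul_zero, mul_neg,
        Finset.sum_ite_eq', Finset.mem_univ, if_true]
      rw [sub_mul, single_of_mul_single_mk_cons_false, one_mul, ih]
      abel
    · simp only [foxDerivList, mul_add, Finset.sum_add_distrib, mul_ite, mul_zero,
        Finset.sum_ite_eq', Finset.mem_univ, if_true]
      rw [sub_mul, ← single_mk_cons_true, one_mul, ih]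
      abel

variable (R) in
def foxDeriv (i : α) : R[FreeGroup α] →ₗ[R] R[FreeGroup α] :=
  (MonoidAlgebra.basis (FreeGroup α) R).constr R fun g => foxDerivList i g.toWord

theorem foxDeriv_single (i : α) (g : FreeGroup α) (r : R) :
    foxDeriv R i (single g r) = r • foxDerivList i g.toWord := by
  rw [← mul_one r, ← MonoidAlgebra.smul_single', map_smul, mul_one, ← MonoidAlgebra.basis_apply]
  exact congrArg (r • ·) (Module.Basis.constr_basis _ _ _ _)

/-- `MonoidAlgebra.lift R R _ 1` is the augmentation `ε`. -/
theorem eq_lift_smul_one_add_sum_foxDeriv [Fintype α] (f : R[FreeGroup α]) :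
    f = MonoidAlgebra.lift R R (FreeGroup α) 1 f • 1 +
      ∑ i, (single (of i) 1 - 1) * foxDeriv R i f := by
  induction f using MonoidAlgebra.induction_linear with
  | zero => simp
  | add f g hf hg =>
    conv_lhs => rw [hf, hg]
    simp only [map_add, add_smul, mul_add, Finset.sum_add_distrib]
    abel
  | single g r =>
    simp only [MonoidAlgebra.lift_single, foxDeriv_single, mul_smul_comm, ← Finset.smul_sum]
    rw [MonoidHom.one_apply, smul_eq_mul, mul_one, ← smul_add,
      ← single_mk_eq_one_add_sum_foxDerivList, mk_toWord, MonoidAlgebra.smul_single', mul_one]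

theorem eq_zero_of_foxDeriv_eq_zero [Fintype α] {f : R[FreeGroup α]}
    (hε : MonoidAlgebra.lift R R (FreeGroup α) 1 f = 0) (hD : ∀ i, foxDeriv R i f = 0) : f = 0 := by
  rw [eq_lift_smul_one_add_sum_foxDeriv f, hε]
  simp [hD]

theorem toWord_of_mul (j : α) (u : FreeGroup α) :
    (of j * u).toWord =
      if u.toWord.head? = some (j, false) then u.toWord.tail else (j, true) :: u.toWord := by
  rw [← mk_toWord (x := u), of, mul_mk, toWord_mk, List.singleton_append, reduce.cons,
    reduce_toWord, toWord_mk, reduce_toWord]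
  rcases u.toWord with _ | ⟨⟨k, _ | _⟩, t⟩ <;> simp [eq_comm]

theorem coeff_foxDerivList_of_length_le (i : α) (l : List (α × Bool)) {u : FreeGroup α}
    (hl : l.length ≤ u.norm) :
    (foxDerivList i l : R[FreeGroup α]).coeff u =
      if u = mk l ∧ l.head? = some (i, false) then -1 else 0 := by
  induction l with
  | nil => simp [foxDerivList]
  | cons a l ih =>
    have hne : mk l ≠ u := by
      rintro rfl
      have := norm_mk_le (L₁ := l)
      simp only [List.length_cons] at hl
      omega
    have htail := ih (by simp only [List.length_cons] at hl; omega)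
    rw [if_neg (fun h => hne h.1.symm)] at htail
    obtain ⟨j, _ | _⟩ := a
    · by_cases hij : i = j
      · subst hij
        simp only [foxDerivList, MonoidAlgebra.coeff_add, Finsupp.add_apply, htail, if_true]
        split_ifs <;> simp_all
      · simp [foxDerivList, htail, hij, Ne.symm hij]
    · simp only [foxDerivList, MonoidAlgebra.coeff_add, Finsupp.add_apply, htail]
      split_ifs <;> simp_all

theorem foxDeriv_apply (i : α) (f : R[FreeGroup α]) :
    foxDeriv R i f = f.coeff.sum fun g r => r • foxDerivList i g.toWord :=
  Module.Basis.constr_apply _ _ _ _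

theorem coeff_foxDeriv_of_le_norm (i : α) {f : R[FreeGroup α]} {M : ℕ}
    (hf : ∀ g, M < g.norm → f.coeff g = 0) {u : FreeGroup α} (hu : M ≤ u.norm) :
    (foxDeriv R i f).coeff u = if u.toWord.head? = some (i, false) then -f.coeff u else 0 := by
  have hl : ∀ g, f.coeff g ≠ 0 → g.toWord.length ≤ u.norm := fun g hg =>
    (not_lt.mp (mt (hf g) hg)).trans hu
  rw [foxDeriv_apply, MonoidAlgebra.coeff_finsuppSum, Finsupp.sum_apply]
  rw [Finsupp.sum_eq_single u]
  · rw [MonoidAlgebra.coeff_smul, Finsupp.smul_apply, coeff_foxDerivList_of_length_le i _ le_rfl,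
      mk_toWord]
    split_ifs <;> simp_all
  · intro g hg hgu
    rw [MonoidAlgebra.coeff_smul, Finsupp.smul_apply, coeff_foxDerivList_of_length_le i _ (hl g hg),
      mk_toWord, if_neg (fun h => hgu h.1.symm), smul_zero]
  · simp

theorem coeff_foxDeriv_eq_zero_of_le_norm (i : α) {f : R[FreeGroup α]} {M : ℕ}
    (hf : ∀ g, M < g.norm ∨ M = g.norm ∧ (∃ k, g.toWord.head? = some (k, false)) → f.coeff g = 0)
    {u : FreeGroup α} (hu : M ≤ u.norm) : (foxDeriv R i f).coeff u = 0 := by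
  rw [coeff_foxDeriv_of_le_norm i (fun g hg => hf g (.inl hg)) hu]
  split_ifs with h
  · rw [hf u ((lt_or_eq_of_le hu).imp_right fun e => ⟨e, i, h⟩), neg_zero]
  · rfl

theorem coeff_single_of_mul_foxDeriv_eq_zero (j : α) {f : R[FreeGroup α]} {M : ℕ}
    (hf : ∀ g, M < g.norm → f.coeff g = 0) {u : FreeGroup α}
    (hu : M < u.norm ∨ M = u.norm ∧ ∃ k, u.toWord.head? = some (k, false)) :
    (single (of j) 1 * foxDeriv R j f).coeff u = 0 := by
  obtain ⟨v, rfl⟩ : ∃ v, u = of j * v := ⟨(of j)⁻¹ * u, (mul_inv_cancel_left _ _).symm⟩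
  rw [MonoidAlgebra.coeff_single_mul_mul, one_mul]
  have hw := toWord_of_mul j v
  by_cases hv : v.toWord.head? = some (j, false)
  · rw [if_pos hv] at hw
    have hMv : M < v.norm := by
      have : v.toWord ≠ [] := fun h => by simp [h] at hv
      have := List.length_pos_of_ne_nil this
      simp only [norm, hw, List.length_tail] at hu
      unfold norm
      omega
    rw [coeff_foxDeriv_of_le_norm j hf hMv.le, hf v hMv, neg_zero, ite_self]
  · rw [if_neg hv] at hw
    have hMv : M ≤ v.norm := by
      simp only [norm, hw, List.length_cons, List.head?_cons, Option.some.injEq,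
        Prod.mk.injEq, Bool.true_eq_false, and_false, exists_false, or_false] at hu
      unfold norm
      omega
    rw [coeff_foxDeriv_of_le_norm j hf hMv, if_neg hv]

end FreeGroup

section Magnus

open FreeGroup
open MonoidAlgebra (single)

variable {n : ℕ}

theorem Ecoef_nil_right (l : List (Fin n × Bool)) : Ecoef l [] = 1 := by
  induction l with
  | nil => rw [Ecoef]
  | cons a l ih => rw [Ecoef, ih]

theorem Ecoef_append : ∀ (w : List (Fin n)) (l₁ l₂ : List (Fin n × Bool)),
    Ecoef (l₁ ++ l₂) w =
      ∑ k ∈ Finset.range (w.length + 1), Ecoef l₁ (w.take k) * Ecoef l₂ (w.drop k)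
  | w, [], l₂ => by
    cases w with
    | nil => simp [Ecoef_nil_right]
    | cons j w =>
      rw [Finset.sum_range_succ']
      simp [Ecoef]
  | [], _ :: _, l₂ => by simp [Ecoef_nil_right]
  | j :: w, (i, true) :: l₁, l₂ => by
    rw [List.cons_append, Ecoef, Ecoef_append (j :: w) l₁ l₂, Ecoef_append w l₁ l₂]
    conv_lhs => rw [Finset.sum_range_succ']
    conv_rhs => rw [Finset.sum_range_succ']
    by_cases hji : j = i
    · simp only [hji, List.length_cons, List.take_succ_cons, List.drop_succ_cons, List.take_zero,
        List.drop_zero, Ecoef_nil_right, one_mul, ↓reduceIte, Ecoef, add_mul,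
        Finset.sum_add_distrib]
      ring
    · simp [hji, Ecoef, Ecoef_nil_right]
  | j :: w, (i, false) :: l₁, l₂ => by
    have h := Ecoef_append w ((i, false) :: l₁) l₂
    rw [List.cons_append] at h
    rw [List.cons_append, Ecoef, Ecoef_append (j :: w) l₁ l₂, h]
    conv_lhs => rw [Finset.sum_range_succ']
    conv_rhs => rw [Finset.sum_range_succ']
    by_cases hji : j = i
    · simp only [hji, List.length_cons, List.take_succ_cons, List.drop_succ_cons, List.take_zero,
        List.drop_zero, Ecoef_nil_right, one_mul, ↓reduceIte, Ecoef, sub_mul,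
        Finset.sum_sub_distrib]
      ring
    · simp [hji, Ecoef, Ecoef_nil_right]
  termination_by w l₁ _ => (w.length, l₁.length)

theorem Ecoef_cons_cons_not (x : Fin n) (b : Bool) (l : List (Fin n × Bool)) (w : List (Fin n)) :
    Ecoef ((x, b) :: (x, !b) :: l) w = Ecoef l w := by
  cases b <;> simp only [Bool.not_false, Bool.not_true]
  · induction w with
    | nil => simp [Ecoef_nil_right]
    | cons j w ih =>
      by_cases hjx : j = x
      · simp [Ecoef, hjx, ih]
      · simp [Ecoef, hjx]
  · cases w with
    | nil => simp [Ecoef_nil_right]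
    | cons j w =>
      simp only [Ecoef]
      ring

theorem Ecoef_of_red {l₁ l₂ : List (Fin n × Bool)} (h : Red l₁ l₂) (w : List (Fin n)) :
    Ecoef l₁ w = Ecoef l₂ w := by
  induction h with
  | refl => rfl
  | tail _ hstep ih =>
    obtain ⟨⟩ := hstep
    simp only [ih, Ecoef_append, Ecoef_cons_cons_not]

theorem Ecoef_toWord_mk (l : List (Fin n × Bool)) (w : List (Fin n)) :
    Ecoef (mk l).toWord w = Ecoef l w := by
  rw [toWord_mk]
  exact (Ecoef_of_red reduce.red w).symm

variable (n) in
def magnusLinearMap : MonoidAlgebra ℤ (FreeGroup (Fin n)) →ₗ[ℤ] List (Fin n) → ℤ :=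
  (MonoidAlgebra.basis _ ℤ).constr ℤ fun g w => Ecoef g.toWord w

theorem coe_magnusLinearMap : ⇑(magnusLinearMap n) = magnus n := by
  ext f w
  simp only [magnusLinearMap, Module.Basis.constr_apply, Finsupp.sum, Finset.sum_apply,
    Pi.smul_apply, smul_eq_mul]
  rfl

theorem magnus_zero : magnus n 0 = 0 := by
  rw [← coe_magnusLinearMap, map_zero]

theorem magnus_add (f g : MonoidAlgebra ℤ (FreeGroup (Fin n))) :
    magnus n (f + g) = magnus n f + magnus n g := by
  rw [← coe_magnusLinearMap, map_add]

theorem magnus_neg (f : MonoidAlgebra ℤ (FreeGroup (Fin n))) : magnus n (-f) = -magnus n f := by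
  rw [← coe_magnusLinearMap, map_neg]

theorem magnus_single (g : FreeGroup (Fin n)) (z : ℤ) (w : List (Fin n)) :
    magnus n (single g z) w = z * Ecoef g.toWord w := by
  simp [magnus]

theorem Ecoef_cons_eq_magnus_foxDerivList (i : Fin n) (l : List (Fin n × Bool)) (w : List (Fin n)) :
    Ecoef l (i :: w) = magnus n (foxDerivList i l) w := by
  induction l with
  | nil => simp [Ecoef, foxDerivList, magnus_zero]
  | cons a l ih =>
    obtain ⟨j, _ | _⟩ := a <;>
    · rw [foxDerivList, magnus_add, Pi.add_apply, ← ih, Ecoef]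
      by_cases hij : i = j
      · subst hij
        simp only [if_true, magnus_neg, Pi.neg_apply, magnus_single, one_mul, Ecoef_toWord_mk]
        ring
      · simp [hij, magnus_zero]

theorem magnus_one : magnus n 1 = fun w => if w = [] then 1 else 0 := by
  funext w
  rw [MonoidAlgebra.one_def, magnus_single, toWord_one, one_mul]
  cases w <;> simp [Ecoef]

theorem magnus_mul (f f' : MonoidAlgebra ℤ (FreeGroup (Fin n))) (w : List (Fin n)) :
    magnus n (f * f') w =
      ∑ k ∈ Finset.range (w.length + 1), magnus n f (w.take k) * magnus n f' (w.drop k) := by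
  induction f using MonoidAlgebra.induction_linear with
  | zero => simp [magnus_zero]
  | add f₁ f₂ h₁ h₂ => simp [add_mul, magnus_add, h₁, h₂, Finset.sum_add_distrib]
  | single g z =>
    induction f' using MonoidAlgebra.induction_linear with
    | zero => simp [magnus_zero]
    | add f₁ f₂ h₁ h₂ => simp [mul_add, magnus_add, h₁, h₂, Finset.sum_add_distrib]
    | single g' z' =>
      have hgg' : g * g' = mk (g.toWord ++ g'.toWord) := by rw [← mul_mk, mk_toWord, mk_toWord]
      simp only [MonoidAlgebra.single_mul_single, magnus_single, hgg', Ecoef_toWord_mk,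
        Ecoef_append, Finset.mul_sum]
      exact Finset.sum_congr rfl fun k _ => by ring

theorem magnus_nil (f : MonoidAlgebra ℤ (FreeGroup (Fin n))) :
    magnus n f [] = MonoidAlgebra.lift ℤ ℤ (FreeGroup (Fin n)) 1 f := by
  simp [magnus, MonoidAlgebra.lift_apply, Ecoef_nil_right]

theorem magnus_cons (f : MonoidAlgebra ℤ (FreeGroup (Fin n))) (i : Fin n) (w : List (Fin n)) :
    magnus n f (i :: w) = magnus n (foxDeriv ℤ i f) w := by
  induction f using MonoidAlgebra.induction_linear with
  | zero => simp [magnus_zero]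
  | add f₁ f₂ h₁ h₂ => simp [magnus_add, h₁, h₂]
  | single g z =>
    rw [magnus_single, foxDeriv_single, Ecoef_cons_eq_magnus_foxDerivList, ← coe_magnusLinearMap,
      map_zsmul]
    rfl

theorem magnus_foxDeriv_eq_zero {f : MonoidAlgebra ℤ (FreeGroup (Fin n))} (hf : magnus n f = 0)
    (i : Fin n) : magnus n (foxDeriv ℤ i f) = 0 :=
  funext fun w => by rw [← magnus_cons, hf]; rfl

theorem magnus_mul_eq_zero_of_right (x : MonoidAlgebra ℤ (FreeGroup (Fin n)))
    {f : MonoidAlgebra ℤ (FreeGroup (Fin n))} (hf : magnus n f = 0) : magnus n (x * f) = 0 :=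
  funext fun w => by simp [magnus_mul, hf]

theorem lift_one_eq_zero_of_magnus_eq_zero {f : MonoidAlgebra ℤ (FreeGroup (Fin n))}
    (hf : magnus n f = 0) : MonoidAlgebra.lift ℤ ℤ (FreeGroup (Fin n)) 1 f = 0 := by
  rw [← magnus_nil, hf]
  rfl

theorem eq_zero_of_magnus_eq_zero_of_norm_lt {f : MonoidAlgebra ℤ (FreeGroup (Fin n))}
    (hf : magnus n f = 0) (M : ℕ) (hM : ∀ g, M ≤ g.norm → f.coeff g = 0) : f = 0 := by
  induction M generalizing f with
  | zero => exact MonoidAlgebra.ext (Finsupp.ext fun g => hM g (Nat.zero_le _))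
  | succ M ih =>
    refine eq_zero_of_foxDeriv_eq_zero (lift_one_eq_zero_of_magnus_eq_zero hf) fun j => ?_
    have hjf := magnus_mul_eq_zero_of_right (single (of j) 1) (magnus_foxDeriv_eq_zero hf j)
    have hunit : IsUnit (single (of j) (1 : ℤ)) :=
      (Group.isUnit (of j)).map (MonoidAlgebra.of ℤ (FreeGroup (Fin n)))
    refine hunit.mul_right_eq_zero.mp <|
      eq_zero_of_foxDeriv_eq_zero (lift_one_eq_zero_of_magnus_eq_zero hjf) fun k => ?_
    exact ih (magnus_foxDeriv_eq_zero hjf k) fun u hu =>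
      coeff_foxDeriv_eq_zero_of_le_norm k
        (fun g hg => coeff_single_of_mul_foxDeriv_eq_zero j hM hg) hu

theorem eq_zero_of_magnus_eq_zero {f : MonoidAlgebra ℤ (FreeGroup (Fin n))}
    (hf : magnus n f = 0) : f = 0 :=
  eq_zero_of_magnus_eq_zero_of_norm_lt hf (f.coeff.support.sup FreeGroup.norm + 1) fun g hg => by
    by_contra h
    have := Finset.le_sup (f := FreeGroup.norm) (Finsupp.mem_support_iff.mpr h)
    omega

end Magnus

/-- the algebra morphism `r : ℤG → ℤ⟨⟨x₁,…,xₙ⟩⟩`, `gᵢ ↦ 1 + xᵢ`, from the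
group ring of the free group on `n` generators to noncommutative formal power series over
`ℤ` is injective.  (A power series is given by its family of coefficients; `magnus` is a
ring morphism for the convolution product, as recorded in the first two clauses.) -/
theorem magnus_injective (n : ℕ) :
    (magnus n 1 = fun w => if w = [] then 1 else 0) ∧
    (∀ f f' w, magnus n (f * f') w =
      ∑ i ∈ Finset.range (w.length + 1),
        magnus n f (w.take i) * magnus n f' (w.drop i)) ∧
    Function.Injective (magnus n) := by
  refine ⟨magnus_one, magnus_mul, ?_⟩
  rw [← coe_magnusLinearMap, ← LinearMap.ker_eq_bot, LinearMap.ker_eq_bot']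
  exact fun f hf => eq_zero_of_magnus_eq_zero (by rwa [coe_magnusLinearMap] at hf)

end
end

section
/- Let k be a commutative ℚ-algebra and F₂ the free group on X₀, X₁. In the group algebra kF₂ one has the direct sum decomposition kF₂ = k ⊕ (kF₂)(X₁−1) ⊕ (kF₂)(X₀−1); consequently, setting W := k ⊕ (kF₂)(X₁−1), one has kF₂ = W ⊕ (kF₂)(X₀−1). -/
noncomputable section

open MonoidAlgebra

variable (k : Type*) [CommRing k] [Algebra ℚ k]

/-- The free group on two generators `X₀, X₁` (indexed by `false, true`). -/
abbrev F₂ := FreeGroup Bool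

/-- `X i` : the generators of `kF₂` coming from the group. -/
def X (b : Bool) : MonoidAlgebra k F₂ := MonoidAlgebra.of k F₂ (FreeGroup.of b)

/-- The left ideal `(kF₂)·(X b − 1)`, viewed as a `k`-submodule of `kF₂`:
the range of right multiplication by `X b − 1`. -/
def leftIdeal (b : Bool) : Submodule k (MonoidAlgebra k F₂) :=
  LinearMap.range (LinearMap.mulRight k (X k b - 1))

/-- The scalars `k·1 ⊆ kF₂` as a `k`-submodule. -/
def scalars : Submodule k (MonoidAlgebra k F₂) := Submodule.span k {1}

/-- `W := k ⊕ (kF₂)(X₁ − 1)`. -/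
def Wmod : Submodule k (MonoidAlgebra k F₂) := scalars k ⊔ leftIdeal k true


/-!
The Fox derivatives `∂_b` of `R[F]`, `F` free on `α`, are the `R`-linear maps determined by
`∂_b (x_c) = δ_bc` and `∂_b (g h) = ∂_b g + g ∂_b h` on group elements. They satisfy
`∂_b (a (x_c - 1)) = δ_bc a`, the augmentation `ε` kills every `a (x_c - 1)`, and every element
satisfies `a = ε a + ∑_b ∂_b a (x_b - 1)`. Hence `a ↦ ε a` and `a ↦ ∂_b a (x_b - 1)` are
complementary projections onto `R` and the left ideals `R[F] (x_b - 1)`.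
-/

namespace DirectSum

variable {R M ι : Type*} [Ring R] [AddCommGroup M] [Module R M] [DecidableEq ι]

theorem isInternal_of_sum_proj [Fintype ι] {S : ι → Submodule R M} (P : ι → M →ₗ[R] M)
    (sum_proj : ∀ x, ∑ i, P i x = x) (proj_mem : ∀ i x, P i x ∈ S i)
    (proj_eq_zero : ∀ i j, i ≠ j → ∀ x ∈ S j, P i x = 0) : IsInternal S := by
  have proj_eq_self : ∀ i, ∀ x ∈ S i, P i x = x := fun i x hx => by
    rw [← Finset.sum_eq_single i (fun j _ hji => proj_eq_zero j i hji x hx)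
      (absurd (Finset.mem_univ i)), sum_proj]
  refine isInternal_submodule_of_iSupIndep_of_iSup_eq_top (fun i => ?_) ?_
  · have : (⨆ j, ⨆ (_ : j ≠ i), S j) ≤ LinearMap.ker (P i) :=
      iSup₂_le fun j hji x hx => proj_eq_zero i j hji.symm x hx
    refine Submodule.disjoint_def.2 fun x hxi hx => ?_
    rw [← proj_eq_self i x hxi]
    exact this hx
  · refine eq_top_iff.2 fun x _ => ?_
    rw [← sum_proj x]
    exact Submodule.sum_mem _ fun i _ => Submodule.mem_iSup_of_mem i (proj_mem i x)

theorem IsInternal.comp_bijective {ι' : Type*} [DecidableEq ι'] {S : ι → Submodule R M}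
    (h : IsInternal S) {f : ι' → ι} (hf : f.Bijective) : IsInternal (S ∘ f) :=
  isInternal_submodule_of_iSupIndep_of_iSup_eq_top (h.submodule_iSupIndep.comp hf.injective)
    (by simpa only [Function.comp_def, hf.surjective.iSup_comp] using h.submodule_iSup_eq_top)

theorem IsInternal.isCompl_sup {S : ι → Submodule R M} {i j l : ι}
    (hil : i ≠ l) (hjl : j ≠ l) (h : (Set.univ : Set ι) = {i, j, l}) (hS : IsInternal S) :
    IsCompl (S i ⊔ S j) (S l) := by
  refine ⟨?_, ?_⟩
  · have := hS.submodule_iSupIndep.disjoint_biSup (x := l) (y := {i, j})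
      (by simp [hil.symm, hjl.symm])
    rw [iSup_pair] at this
    exact this.symm
  · rw [codisjoint_iff, ← hS.submodule_iSup_eq_top, ← iSup_univ, h, iSup_insert, iSup_pair,
      sup_assoc]

end DirectSum

def unitsMulLeft (A : Type*) [Ring A] : Aˣ →* MulAut (Multiplicative A) :=
  (MulAutMultiplicative A).symm.toMonoidHom.comp (DistribMulAction.toAddAut Aˣ A)

section FoxCalculus

variable (R : Type*) {α : Type*} [CommRing R] [DecidableEq α]

/-- A map `d` with `d (g h) = d g + g d h` amounts to a homomorphism `g ↦ (d g, g)` into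
`R[F] ⋊ R[F]ˣ`, so the universal property of the free group builds `d` from its values on
generators. -/
def foxHom (b : α) :
    FreeGroup α →* Multiplicative R[FreeGroup α] ⋊[unitsMulLeft _] R[FreeGroup α]ˣ :=
  FreeGroup.lift fun c => ⟨.ofAdd (if c = b then 1 else 0), (of R _).toHomUnits (.of c)⟩

def foxCocycle (b : α) (g : FreeGroup α) : R[FreeGroup α] := (foxHom R b g).left.toAdd

theorem foxHom_right (b : α) (g : FreeGroup α) :
    ((foxHom R b g).right : R[FreeGroup α]) = of R _ g := by
  have : SemidirectProduct.rightHom.comp (foxHom R b) = (of R _).toHomUnits :=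
    FreeGroup.ext_hom _ _ fun c => by simp [foxHom]
  exact congr_arg Units.val (DFunLike.congr_fun this g)

theorem foxCocycle_of (b c : α) : foxCocycle R b (.of c) = if c = b then 1 else 0 := by
  simp [foxCocycle, foxHom]

theorem foxCocycle_mul (b : α) (g h : FreeGroup α) :
    foxCocycle R b (g * h) = foxCocycle R b g + of R _ g * foxCocycle R b h := by
  simp only [foxCocycle, map_mul, SemidirectProduct.mul_left, toAdd_mul]
  rw [← foxHom_right R b g]
  rfl

theorem foxCocycle_one (b : α) : foxCocycle R b 1 = 0 := by
  simp [foxCocycle]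

theorem foxCocycle_inv (b : α) (g : FreeGroup α) :
    foxCocycle R b g⁻¹ = -(of R _ g⁻¹ * foxCocycle R b g) := by
  refine eq_neg_of_add_eq_zero_left ?_
  rw [← foxCocycle_mul, inv_mul_cancel, foxCocycle_one]

theorem of_sub_one_eq_sum_foxCocycle [Fintype α] (g : FreeGroup α) :
    of R _ g - 1 = ∑ b, foxCocycle R b g * (of R _ (.of b) - 1) := by
  induction g using FreeGroup.induction_on with
  | C1 => simp only [map_one, sub_self, foxCocycle_one, zero_mul, Finset.sum_const_zero]
  | of c => simp [foxCocycle_of]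
  | inv_of c ih =>
    generalize FreeGroup.of c = g at ih ⊢
    have : of R _ g⁻¹ - 1 = -(of R _ g⁻¹ * (of R _ g - 1)) := by
      rw [mul_sub, ← map_mul, inv_mul_cancel, map_one, mul_one, neg_sub]
    simp only [this, ih, foxCocycle_inv, Finset.mul_sum, neg_mul, mul_assoc,
      Finset.sum_neg_distrib]
  | mul g h ihg ihh =>
    have : of R _ (g * h) - 1 = (of R _ g - 1) + of R _ g * (of R _ h - 1) := by
      rw [map_mul]; noncomm_ring
    simp only [this, ihg, ihh, foxCocycle_mul, Finset.mul_sum, add_mul, mul_assoc,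
      Finset.sum_add_distrib]

def foxDeriv (b : α) : R[FreeGroup α] →ₗ[R] R[FreeGroup α] :=
  (MonoidAlgebra.basis (FreeGroup α) R).constr R (foxCocycle R b)

theorem foxDeriv_of (b : α) (g : FreeGroup α) : foxDeriv R b (of R _ g) = foxCocycle R b g :=
  (MonoidAlgebra.basis (FreeGroup α) R).constr_basis R _ g

theorem foxDeriv_one (b : α) : foxDeriv R b 1 = 0 := by
  rw [← map_one (of R _), foxDeriv_of, foxCocycle_one]

theorem foxDeriv_mul_of (b : α) (a : R[FreeGroup α]) (g : FreeGroup α) :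
    foxDeriv R b (a * of R _ g) = foxDeriv R b a + a * foxCocycle R b g := by
  suffices (foxDeriv R b).comp (LinearMap.mulRight R (of R _ g)) =
      foxDeriv R b + LinearMap.mulRight R (foxCocycle R b g) from LinearMap.congr_fun this a
  refine (MonoidAlgebra.basis (FreeGroup α) R).ext fun h => ?_
  simp only [LinearMap.comp_apply, LinearMap.add_apply, LinearMap.mulRight_apply, basis_apply,
    ← of_apply, ← map_mul, foxDeriv_of, foxCocycle_mul]

theorem foxDeriv_mul_of_sub_one (b c : α) (a : R[FreeGroup α]) :
    foxDeriv R b (a * (of R _ (.of c) - 1)) = if c = b then a else 0 := by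
  rw [mul_sub, mul_one, map_sub, foxDeriv_mul_of, foxCocycle_of]
  split_ifs <;> simp

theorem counit_of {G : Type*} [Monoid G] (g : G) :
    Bialgebra.counitAlgHom R R[G] (of R _ g) = 1 := by
  simp [of_apply]

theorem counit_mul_of_sub_one {G : Type*} [Monoid G] (a : R[G]) (g : G) :
    Bialgebra.counitAlgHom R R[G] (a * (of R _ g - 1)) = 0 := by
  rw [map_mul, map_sub, counit_of, map_one, sub_self, mul_zero]

theorem eq_algebraMap_counit_add_sum_foxDeriv [Fintype α] (a : R[FreeGroup α]) :
    a = algebraMap R _ (Bialgebra.counitAlgHom R R[FreeGroup α] a) +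
      ∑ b, foxDeriv R b a * (of R _ (.of b) - 1) := by
  suffices LinearMap.id = (Algebra.linearMap R R[FreeGroup α]).comp
      (Bialgebra.counitAlgHom R R[FreeGroup α]).toLinearMap +
      ∑ b, (LinearMap.mulRight R (of R _ (.of b) - 1)).comp (foxDeriv R b) by
    simpa using LinearMap.congr_fun this a
  refine (MonoidAlgebra.basis (FreeGroup α) R).ext fun g => ?_
  simp only [basis_apply, ← of_apply, LinearMap.id_apply, LinearMap.add_apply,
    LinearMap.comp_apply, LinearMap.sum_apply, LinearMap.mulRight_apply, foxDeriv_of,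
    ← of_sub_one_eq_sum_foxCocycle]
  rw [AlgHom.toLinearMap_apply, counit_of, Algebra.linearMap_apply, map_one, add_sub_cancel]

end FoxCalculus

section Decomposition

variable (R α : Type*) [CommRing R]

def foxSummand : Option α → Submodule R R[FreeGroup α]
  | none => Submodule.span R {1}
  | some b => LinearMap.range (LinearMap.mulRight R (of R _ (.of b) - 1))

def foxProj [DecidableEq α] : Option α → R[FreeGroup α] →ₗ[R] R[FreeGroup α]
  | none => (Algebra.linearMap R _).comp (Bialgebra.counitAlgHom R R[FreeGroup α]).toLinearMap
  | some b => (LinearMap.mulRight R (of R _ (.of b) - 1)).comp (foxDeriv R b)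

theorem isInternal_foxSummand [DecidableEq α] [Fintype α] :
    DirectSum.IsInternal (foxSummand R α) := by
  refine DirectSum.isInternal_of_sum_proj (foxProj R α) (fun a => ?_) ?_ ?_
  · rw [Fintype.sum_option]
    exact (eq_algebraMap_counit_add_sum_foxDeriv R a).symm
  · rintro (_ | b) a
    · exact Submodule.mem_span_singleton.2 ⟨_, (Algebra.algebraMap_eq_smul_one _).symm⟩
    · exact ⟨_, rfl⟩
  · rintro (_ | b) (_ | c) hne x hx
    · exact absurd rfl hne
    · obtain ⟨a, rfl⟩ := hx
      rw [foxProj, LinearMap.comp_apply, LinearMap.mulRight_apply, AlgHom.toLinearMap_apply,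
        counit_mul_of_sub_one, map_zero]
    · obtain ⟨r, rfl⟩ := Submodule.mem_span_singleton.1 hx
      simp [foxProj, foxDeriv_one]
    · obtain ⟨a, rfl⟩ := hx
      simp only [foxProj, LinearMap.comp_apply, LinearMap.mulRight_apply]
      rw [foxDeriv_mul_of_sub_one, if_neg fun h => hne (congrArg _ h.symm), zero_mul]

end Decomposition

/-- `kF₂ = k ⊕ (kF₂)(X₁−1) ⊕ (kF₂)(X₀−1)` as `k`-modules, and consequently,
with `W := k ⊕ (kF₂)(X₁−1)`, one has `kF₂ = W ⊕ (kF₂)(X₀−1)`. -/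
theorem monoidAlgebra_directSum_decomposition :
    DirectSum.IsInternal
      (fun i : Fin 3 =>
        match i with
        | 0 => scalars k
        | 1 => leftIdeal k true
        | 2 => leftIdeal k false) ∧
    IsCompl (Wmod k) (leftIdeal k false) := by
  have hfamily : (fun i : Fin 3 =>
      match i with
      | 0 => scalars k
      | 1 => leftIdeal k true
      | 2 => leftIdeal k false) = foxSummand k Bool ∘ ![none, some true, some false] := by
    funext i
    fin_cases i <;> simp [foxSummand, scalars, leftIdeal, X]
  have hint := (isInternal_foxSummand k Bool).comp_bijective
    (f := ![none, some true, some false]) (by decide)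
  rw [← hfamily] at hint
  refine ⟨hint, ?_⟩
  simpa only [Wmod] using hint.isCompl_sup (i := 0) (j := 1) (l := 2) (by decide) (by decide)
    (by ext i; fin_cases i <;> simp)

end
end

section
/- Let Fₙ be the free group on n generators. The natural continuous homomorphism from the pro-p completion Fₙ^(p) to the group Fₙ(ℚ_p) of ℚ_p-points of the prounipotent completion is injective. -/
noncomputable section

variable (p : ℕ) [Fact p.Prime] (n : ℕ)

/-- A noncommutative formal power series in `n` variables over `ℚ_p`, given by its family
of coefficients indexed by words in the variables. -/
def NCS := List (Fin n) → ℚ_[p]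

/-- `dcount w u v` is the coefficient of `u ⊗ v` in `Δ(w)`, for the coproduct of
`ℚ_p⟨⟨t₁,…,tₙ⟩⟩` determined by `Δ(tᵢ) = tᵢ ⊗ 1 + 1 ⊗ tᵢ + tᵢ ⊗ tᵢ` (each letter of `w` is
distributed to the left factor, the right factor, or both, preserving the order). -/
def dcount {n : ℕ} : List (Fin n) → List (Fin n) → List (Fin n) → ℕ
  | [], u, v => if u = [] ∧ v = [] then 1 else 0
  | c :: w, u, v =>
      (match u with
        | c' :: u' => if c' = c then dcount w u' v else 0
        | [] => 0) +
      (match v with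
        | c' :: v' => if c' = c then dcount w u v' else 0
        | [] => 0) +
      (match u, v with
        | c' :: u', c'' :: v' => if c' = c ∧ c'' = c then dcount w u' v' else 0
        | _, _ => 0)

/-- The finite set of words of length `m`. -/
def wordsLen (n : ℕ) : ℕ → Finset (List (Fin n))
  | 0 => {[]}
  | m + 1 => ((Finset.univ : Finset (Fin n)) ×ˢ wordsLen n m).image fun q => q.1 :: q.2

/-- The finite set of words of length at most `L`. -/
def wordsUpTo (n L : ℕ) : Finset (List (Fin n)) :=
  (Finset.range (L + 1)).biUnion (wordsLen n)

/-- `x` is group-like for the coproduct with `Δ(tᵢ) = tᵢ⊗1 + 1⊗tᵢ + tᵢ⊗tᵢ`: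
`Δ(x) = x ⊗ x` and `ε(x) = 1`. -/
def IsGroupLikeT (x : NCS p n) : Prop :=
  x [] = 1 ∧
  ∀ u v : List (Fin n),
    (∑ w ∈ wordsUpTo n (u.length + v.length), x w * (dcount w u v : ℚ_[p])) = x u * x v

/-- `x` has `p`-adic integer coefficients. -/
def IsIntegralSeries (x : NCS p n) : Prop := ∀ w, ‖x w‖ ≤ 1

/-- `eexp w v` is the coefficient at the word `v` (in the variables `u₁,…,uₙ`) of the
image of the word `w` (in the variables `t₁,…,tₙ`) under the substitution
`tᵢ ↦ e^{uᵢ} − 1 = Σ_{k≥1} uᵢ^k / k!`. -/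
def eexp {n : ℕ} : List (Fin n) → List (Fin n) → ℚ
  | [], v => if v = [] then 1 else 0
  | i :: w, v =>
      ∑ k ∈ Finset.Icc 1 v.length,
        if v.take k = List.replicate k i then ((k.factorial : ℚ))⁻¹ * eexp w (v.drop k)
        else 0

/-- The continuous algebra morphism `ℚ_p⟨⟨t₁,…,tₙ⟩⟩ → ℚ_p⟨⟨u₁,…,uₙ⟩⟩` given by
`tᵢ ↦ e^{uᵢ} − 1` (the identification of the two presentations of `Fₙ(ℚ_p)`),
computed coefficientwise. -/
def expSubst (x : NCS p n) : NCS p n :=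
  fun v => ∑ w ∈ wordsUpTo n v.length, x w * ((eexp w v : ℚ) : ℚ_[p])

lemma mem_wordsLen {n : ℕ} : ∀ {m : ℕ} {w : List (Fin n)}, w ∈ wordsLen n m ↔ w.length = m
  | 0, w => by simp [wordsLen, List.length_eq_zero_iff]
  | m + 1, w => by
    simp only [wordsLen, Finset.mem_image, Finset.mem_product, Finset.mem_univ, true_and,
      Prod.exists]
    constructor
    · rintro ⟨a, b, hb, rfl⟩
      simp [mem_wordsLen.mp hb]
    · intro hw
      cases w with
      | nil => simp at hw
      | cons a b =>
        exact ⟨a, b, mem_wordsLen.mpr (by simpa using hw), rfl⟩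

lemma mem_wordsUpTo {n L : ℕ} {w : List (Fin n)} : w ∈ wordsUpTo n L ↔ w.length ≤ L := by
  simp only [wordsUpTo, Finset.mem_biUnion, Finset.mem_range, mem_wordsLen]
  constructor
  · rintro ⟨m, hm, rfl⟩; omega
  · intro h; exact ⟨w.length, by omega, rfl⟩

lemma eexp_eq_zero {n : ℕ} : ∀ (w v : List (Fin n)), v.length < w.length → eexp w v = 0
  | [], v, h => by simp at h
  | i :: w, v, h => by
    simp only [eexp]
    apply Finset.sum_eq_zero
    intro k hk
    simp only [Finset.mem_Icc] at hk
    have : (v.drop k).length < w.length := by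
      simp only [List.length_drop]
      simp only [List.length_cons] at h
      omega
    rw [eexp_eq_zero w (v.drop k) this]
    split <;> simp

lemma eexp_diag {n : ℕ} :
    ∀ (w v : List (Fin n)), w.length = v.length → eexp w v = if w = v then 1 else 0
  | [], v, h => by
    simp only [eexp]
    have : v = [] := by simpa using h.symm
    simp [this]
  | i :: w, v, h => by
    cases v with
    | nil => simp at h
    | cons j v' =>
      have hlen : w.length = v'.length := by simpa using h
      simp only [eexp]
      rw [Finset.sum_eq_single 1]
      · have htake : (j :: v').take 1 = [j] := rfl
        have hrep : List.replicate 1 i = [i] := rfl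
        rw [htake, hrep]
        by_cases hij : j = i
        · subst hij
          rw [if_pos rfl]
          simp only [List.drop_one, List.tail_cons, Nat.factorial_one, Nat.cast_one, inv_one,
            one_mul]
          rw [eexp_diag w v' hlen]
          by_cases hwv : w = v'
          · simp [hwv]
          · rw [if_neg hwv, if_neg (by simp [hwv])]
        · rw [if_neg (by simp [hij]),
            if_neg (by intro hc; exact hij (by injection hc with h1 _; exact h1.symm))]
      · intro k hk hk1
        simp only [Finset.mem_Icc, List.length_cons] at hk
        have : ((j :: v').drop k).length < w.length := by
          simp only [List.length_drop, List.length_cons]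
          omega
        rw [eexp_eq_zero w _ this]
        split <;> simp
      · intro hmem
        simp at hmem

theorem expSubst_injective_aux {x y : NCS p n} (h : expSubst p n x = expSubst p n y) : x = y := by
  have key : ∀ m : ℕ, ∀ v : List (Fin n), v.length = m → x v = y v := by
    intro m
    induction m using Nat.strong_induction_on with
    | _ m ih =>
      intro v hv
      have hx : expSubst p n x v = expSubst p n y v := congrFun h v
      unfold expSubst at hx
      have hvmem : v ∈ wordsUpTo n v.length := mem_wordsUpTo.mpr le_rfl
      rw [← Finset.add_sum_erase _ _ hvmem, ← Finset.add_sum_erase _ _ hvmem] at hx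
      have hrest :
          ∑ w ∈ (wordsUpTo n v.length).erase v, x w * ((eexp w v : ℚ) : ℚ_[p]) =
            ∑ w ∈ (wordsUpTo n v.length).erase v, y w * ((eexp w v : ℚ) : ℚ_[p]) := by
        apply Finset.sum_congr rfl
        intro w hw
        rw [Finset.mem_erase] at hw
        have hwlen := mem_wordsUpTo.mp hw.2
        rcases lt_or_eq_of_le hwlen with hlt | heq
        · rw [ih w.length (hv ▸ hlt) w rfl]
        · rw [eexp_diag w v heq, if_neg hw.1]
          simp
      rw [hrest] at hx
      have hdiag : eexp v v = 1 := by rw [eexp_diag v v rfl]; simp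
      rw [hdiag] at hx
      have := add_right_cancel hx
      simpa using this
  funext v
  exact key v.length v rfl

/-- the natural map from the pro-`p` completion `Fₙ^{(p)}` — identified with
the group-like elements of `ℤ_p⟨⟨t₁,…,tₙ⟩⟩` — to `Fₙ(ℚ_p)` — the group-like elements of
`ℚ_p⟨⟨u₁,…,uₙ⟩⟩` with the `uᵢ` primitive — induced by `tᵢ ↦ e^{uᵢ} − 1`, is injective. -/
theorem propCompletion_to_prounipotent_injective :
    Function.Injective
      (fun x : {x : NCS p n // IsGroupLikeT p n x ∧ IsIntegralSeries p n x} =>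
        expSubst p n x.val) := by
  intro x y h
  exact Subtype.ext (expSubst_injective_aux p n h)

end
end

section
/- For n ≥ 3, the pure braid group Kₙ satisfies (Kₙ, F_{n−1}) = (F_{n−1}, F_{n−1}), where F_{n−1} = ⟨x_{i1},…,x_{in}⟩ ≤ Kₙ is the free normal subgroup arising as kernel of the strand-forgetting map Kₙ → K_{n−1}. -/
noncomputable section

open scoped commutatorElement

/-- Index type for the standard generators `x_{ij}` (`i < j`) of the pure braid group. -/
def BIdx (n : ℕ) := {p : Fin n × Fin n // p.1 < p.2}

/-- The generator `x_{ij}` in the free group. -/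
def xg {n : ℕ} (i j : Fin n) (h : i < j) : FreeGroup (BIdx n) := FreeGroup.of ⟨(i, j), h⟩

/-- The defining relations of the Artin pure braid group `Kₙ`:
`(a_{ijk}, x_{ij}) = (a_{ijk}, x_{ik}) = (a_{ijk}, x_{jk}) = 1` for `i<j<k`, where
`a_{ijk} = x_{ij} x_{ik} x_{jk}`, together with `(x_{ij}, x_{kl}) = (x_{il}, x_{jk}) = 1` and
`(x_{ik}, x_{ij}⁻¹ x_{jl} x_{ij}) = 1` for `i<j<k<l`. -/
def pureBraidRels (n : ℕ) : Set (FreeGroup (BIdx n)) :=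
  {r | ∃ (i j k : Fin n) (hij : i < j) (hjk : j < k),
      r = ⁅xg i j hij * xg i k (hij.trans hjk) * xg j k hjk, xg i j hij⁆ ∨
      r = ⁅xg i j hij * xg i k (hij.trans hjk) * xg j k hjk, xg i k (hij.trans hjk)⁆ ∨
      r = ⁅xg i j hij * xg i k (hij.trans hjk) * xg j k hjk, xg j k hjk⁆} ∪
  {r | ∃ (i j k l : Fin n) (hij : i < j) (hjk : j < k) (hkl : k < l),
      r = ⁅xg i j hij, xg k l hkl⁆ ∨
      r = ⁅xg i l ((hij.trans hjk).trans hkl), xg j k hjk⁆ ∨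
      r = ⁅xg i k (hij.trans hjk), (xg i j hij)⁻¹ * xg j l (hjk.trans hkl) * xg i j hij⁆}

/-- The Artin pure braid group on `n` strands, via its standard presentation. -/
def PureBraid (n : ℕ) := PresentedGroup (pureBraidRels n)

instance (n : ℕ) : Group (PureBraid n) := by unfold PureBraid; infer_instance

/-- The free subgroup `F_{n-1} = ⟨x_{i1}, …, x_{in}⟩` of `Kₙ` generated by the `x_{ab}`
with `a = i` or `b = i` (the kernel of forgetting the `i`-th strand). -/
def strandSubgroup (n : ℕ) (i : Fin n) : Subgroup (PureBraid n) :=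
  Subgroup.closure
    {g | ∃ j : Fin n,
      (∃ h : i < j, g = PresentedGroup.mk (pureBraidRels n) (xg i j h)) ∨
      (∃ h : j < i, g = PresentedGroup.mk (pureBraidRels n) (xg j i h))}

/-!
Let `F` be the subgroup generated by the `x_{im}`. If every generator `x_{kl}` of `Kₙ` and its
inverse lie in `F · C(x_{im})` for every `m`, then so does every element of `Kₙ`, because the
elements with this property form a subgroup. Hence `F` is normal, and writing
`g = f c` gives `⁅g, x_{im}⁆ = ⁅f, x_{im}⁆ ∈ (F, F)`.

For a single pair of generators one distinguishes the positions of `k, l, i, m`. Disjoint and nested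
pairs commute. Two generators sharing an index lie in a triple `p < q < r` where
`x_{pq} x_{pr} x_{qr}` is central among the three, so each of them is the product of the other two
times a centralizing element. A crossing pair reduces, through the relation
`(x_{pr}, x_{pq}⁻¹ x_{qs} x_{pq}) = 1`, to conjugation by a commutator taken inside a triple;
this is then treated by the same argument applied to the four strands involved.
-/

open Subgroup Pointwise

section InnerAction

variable {G : Type*} [Group G]

/-- Conjugating `s` by `t`, or by `t⁻¹`, is conjugating it by some element of `F`. -/
def ActsInnerly (F : Subgroup G) (t s : G) : Prop :=
  t ∈ (F : Set G) * centralizer {s} ∧ t⁻¹ ∈ (F : Set G) * centralizer {s}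

variable {F K : Subgroup G} {s t u : G}

lemma mul_mem_mul_centralizer {x c : G} (hx : x ∈ (F : Set G) * centralizer {s})
    (hc : c ∈ centralizer {s}) : x * c ∈ (F : Set G) * centralizer {s} := by
  obtain ⟨w, hw, z, hz, rfl⟩ := hx
  exact ⟨w, hw, z * c, mul_mem hz hc, (mul_assoc w z c).symm⟩

lemma mul_mem_mul_centralizer_of_mem {v : G} (hv : v ∈ F) :
    v ∈ (F : Set G) * centralizer {s} :=
  ⟨v, hv, 1, one_mem _, mul_one v⟩

lemma conj_mem_of_mem_mul_centralizer {g : G} (hg : g ∈ (F : Set G) * centralizer {s})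
    (hs : s ∈ F) : g * s * g⁻¹ ∈ F := by
  obtain ⟨w, hw, z, hz, rfl⟩ := hg
  have hzs : z * s = s * z := mem_centralizer_singleton_iff.1 hz
  rw [show w * z * s * (w * z)⁻¹ = w * s * w⁻¹ by rw [mul_assoc w z, hzs]; group]
  exact mul_mem (mul_mem hw hs) (inv_mem hw)

lemma actsInnerly_of_mem (ht : t ∈ F) : ActsInnerly F t s :=
  ⟨mul_mem_mul_centralizer_of_mem ht, mul_mem_mul_centralizer_of_mem (inv_mem ht)⟩

lemma actsInnerly_of_commute (h : Commute t s) : ActsInnerly F t s :=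
  ⟨⟨1, one_mem _, t, mem_centralizer_singleton_iff.2 h.eq, one_mul t⟩,
    ⟨1, one_mem _, t⁻¹, mem_centralizer_singleton_iff.2 h.inv_left.eq, one_mul _⟩⟩

lemma actsInnerly_of_mem_mul_centralizer (hKF : K ≤ F) (hs : s ∈ K)
    (ht : t ∈ (K : Set G) * centralizer (K : Set G)) : ActsInnerly F t s := by
  obtain ⟨w, hw, z, hz, rfl⟩ := ht
  have hzs : z ∈ centralizer {s} := centralizer_le (by simpa using hs) hz
  have hzw : Commute w z := mem_centralizer_iff.1 hz w hw
  refine ⟨⟨w, hKF hw, z, hzs, rfl⟩, ⟨w⁻¹, hKF (inv_mem hw), z⁻¹, inv_mem hzs, ?_⟩⟩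
  rw [mul_inv_rev]
  exact hzw.inv_inv.eq

lemma commutatorElement_mem_of_mem_mul_centralizer (hu : u ∈ K)
    (ht : t ∈ (K : Set G) * centralizer (K : Set G)) :
    ⁅t, u⁆ ∈ K ∧ ⁅t⁻¹, u⁆ ∈ K := by
  obtain ⟨w, hw, z, hz, rfl⟩ := ht
  have hzu : Commute z u := (mem_centralizer_iff.1 hz u hu).symm
  have hzw : Commute z w := (mem_centralizer_iff.1 hz w hw).symm
  have hwz_inv : (w * z)⁻¹ = w⁻¹ * z⁻¹ := by rw [mul_inv_rev, hzw.inv_inv.eq]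
  rw [hwz_inv, commutatorElement_mul_left_eq_conj_mul, commutatorElement_mul_left_eq_conj_mul,
    hzu.commutator_eq, hzu.inv_left.commutator_eq]
  simp only [mul_one, mul_inv_cancel, one_mul]
  exact ⟨commutator_le_self K (commutator_mem_commutator hw hu),
    commutator_le_self K (commutator_mem_commutator (inv_mem hw) hu)⟩

lemma mem_mul_centralizer_of_commute_conj (h : Commute t (u⁻¹ * s * u))
    (hF : ⁅t, u⁆ ∈ (F : Set G) * centralizer {s}) : t ∈ (F : Set G) * centralizer {s} := by
  have hc : Commute (u * t * u⁻¹) s := by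
    simpa [mul_assoc] using (Commute.conj_iff u).2 h
  simpa [commutatorElement_def, mul_assoc] using
    mul_mem_mul_centralizer hF (mem_centralizer_singleton_iff.2 hc.eq)

lemma actsInnerly_of_commute_conj (h : Commute t (u⁻¹ * s * u))
    (h₁ : ⁅t, u⁆ ∈ (F : Set G) * centralizer {s})
    (h₂ : ⁅t⁻¹, u⁆ ∈ (F : Set G) * centralizer {s}) : ActsInnerly F t s :=
  ⟨mem_mul_centralizer_of_commute_conj h h₁,
    mem_mul_centralizer_of_commute_conj h.inv_left h₂⟩

lemma mul_mem_mul_centralizer_of_conj_mem {g h : G} (hgF : ∀ f ∈ F, g * f * g⁻¹ ∈ F)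
    (hg : g ∈ (F : Set G) * centralizer {s}) (hh : h ∈ (F : Set G) * centralizer {s}) :
    g * h ∈ (F : Set G) * centralizer {s} := by
  obtain ⟨w, hw, z, hz, rfl⟩ := hh
  obtain ⟨w', hw', z', hz', rfl⟩ := hg
  refine ⟨w' * z' * w * (w' * z')⁻¹ * w', mul_mem (hgF w hw) hw', z' * z, mul_mem hz' hz, ?_⟩
  group

lemma conj_mem_closure {S : Set G} {g f : G}
    (hg : ∀ s ∈ S, g ∈ (closure S : Set G) * centralizer {s}) (hf : f ∈ closure S) :
    g * f * g⁻¹ ∈ closure S := by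
  have : closure S ≤ (closure S).comap (MulAut.conj g).toMonoidHom :=
    (closure_le _).2 fun s hs => conj_mem_of_mem_mul_centralizer (hg s hs) (subset_closure hs)
  exact this hf

def innerStabilizer (S : Set G) : Subgroup G where
  carrier := {g | ∀ s ∈ S, ActsInnerly (closure S) g s}
  one_mem' _ _ := actsInnerly_of_mem (one_mem _)
  inv_mem' {g} hg s hs := ⟨(hg s hs).2, by simpa using (hg s hs).1⟩
  mul_mem' {g h} hg hh s hs := by
    refine ⟨mul_mem_mul_centralizer_of_conj_mem
      (fun _ => conj_mem_closure fun s hs => (hg s hs).1) (hg s hs).1 (hh s hs).1, ?_⟩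
    rw [mul_inv_rev]
    exact mul_mem_mul_centralizer_of_conj_mem
      (fun _ => conj_mem_closure fun s hs => (hh s hs).2) (hh s hs).2 (hg s hs).2

theorem commutator_top_closure_eq_of_innerStabilizer_eq_top {S : Set G}
    (h : innerStabilizer S = ⊤) :
    ⁅(⊤ : Subgroup G), closure S⁆ = ⁅closure S, closure S⁆ := by
  have hM (g : G) : g ∈ innerStabilizer S := h ▸ mem_top g
  have : (closure S).Normal := ⟨fun f hf g => conj_mem_closure (fun s hs => (hM g s hs).1) hf⟩
  have hN : ⁅closure S, closure S⁆.Normal := commutator_normal _ _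
  refine le_antisymm (commutator_le.2 fun g _ f hf => ?_) (commutator_mono le_top le_rfl)
  induction hf using closure_induction with
  | mem s hs =>
    obtain ⟨w, hw, z, hz, rfl⟩ := (hM g s hs).1
    have hzs : ⁅z, s⁆ = 1 :=
      commutatorElement_eq_one_iff_mul_comm.2 (mem_centralizer_singleton_iff.1 hz)
    simpa [commutatorElement_mul_left_eq_conj_mul, hzs] using
      commutator_mem_commutator hw (subset_closure hs)
  | one => simp
  | mul x y _ _ hx hy =>
    simpa only [commutatorElement_mul_right_eq_mul_conj, mul_assoc] using
      mul_mem hx (hN.conj_mem _ hy x)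
  | inv x _ hx =>
    simpa [commutatorElement_inv_right, commutatorElement_inv] using
      hN.conj_mem _ (inv_mem hx) x⁻¹

lemma mem_closure_mul_centralizer_of_commute {a b c : G} (hb : Commute (a * b * c) b)
    (hc : Commute (a * b * c) c) :
    a ∈ (closure {b, c} : Set G) * centralizer (closure {b, c} : Set G) := by
  refine ⟨(b * c)⁻¹, inv_mem (mul_mem (subset_closure (by simp)) (subset_closure (by simp))),
    a * b * c, ?_, ?_⟩
  · rw [SetLike.mem_coe, centralizer_closure, mem_centralizer_iff]
    rintro _ (rfl | rfl)
    exacts [hb.eq.symm, hc.eq.symm]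
  · show (b * c)⁻¹ * (a * b * c) = a
    rw [← (hb.mul_right hc).inv_right.eq]
    group

lemma mem_closure_mul_centralizer_of_commute_mul {b₁ b₂ b₃ : G}
    (h₁ : Commute (b₁ * b₂ * b₃) b₁) (h₂ : Commute (b₁ * b₂ * b₃) b₂)
    (h₃ : Commute (b₁ * b₂ * b₃) b₃) :
    b₁ ∈ (closure {b₂, b₃} : Set G) * centralizer (closure {b₂, b₃} : Set G) ∧
    b₂ ∈ (closure {b₁, b₃} : Set G) * centralizer (closure {b₁, b₃} : Set G) ∧
    b₃ ∈ (closure {b₁, b₂} : Set G) * centralizer (closure {b₁, b₂} : Set G) := by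
  have rot₁ : b₂ * b₃ * b₁ = b₁ * b₂ * b₃ := mul_left_cancel (a := b₁) <| by
    simpa only [mul_assoc] using h₁.eq
  have rot₂ : b₃ * b₁ * b₂ = b₁ * b₂ * b₃ := mul_right_cancel (b := b₃) <| by
    simpa only [mul_assoc] using h₃.eq.symm
  refine ⟨mem_closure_mul_centralizer_of_commute h₂ h₃, ?_, ?_⟩
  · rw [Set.pair_comm]
    exact mem_closure_mul_centralizer_of_commute (rot₁ ▸ h₃) (rot₁ ▸ h₁)
  · exact mem_closure_mul_centralizer_of_commute (rot₂ ▸ h₁) (rot₂ ▸ h₂)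

end InnerAction

section PureBraid

variable {n : ℕ}

/-- The generator `x_{ab}` indexed by an unordered pair (junk value `1` when `a = b`). -/
def gen (a b : Fin n) : PureBraid n :=
  if h : a < b then PresentedGroup.mk (pureBraidRels n) (xg a b h)
  else if h' : b < a then PresentedGroup.mk (pureBraidRels n) (xg b a h') else 1

lemma gen_of_lt {a b : Fin n} (h : a < b) :
    gen a b = PresentedGroup.mk (pureBraidRels n) (xg a b h) :=
  dif_pos h

lemma gen_comm (a b : Fin n) : gen a b = gen b a := by
  rcases lt_trichotomy a b with h | rfl | h
  · simp only [gen, h, h.not_gt, ↓reduceDIte]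
    rfl
  · rfl
  · simp only [gen, h, h.not_gt, ↓reduceDIte]
    rfl

lemma gen_self (a : Fin n) : gen a a = 1 := by
  simp [gen]

lemma strandSubgroup_eq_closure (i : Fin n) :
    strandSubgroup n i = closure (Set.range (gen i)) := by
  refine le_antisymm (closure_mono ?_) ((closure_le _).2 ?_)
  · rintro g ⟨j, ⟨h, rfl⟩ | ⟨h, rfl⟩⟩
    exacts [⟨j, gen_of_lt h⟩, ⟨j, (gen_comm i j).trans (gen_of_lt h)⟩]
  · rintro _ ⟨j, rfl⟩
    rcases lt_trichotomy i j with h | rfl | h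
    · exact subset_closure ⟨j, Or.inl ⟨h, gen_of_lt h⟩⟩
    · rw [gen_self]
      exact one_mem _
    · exact subset_closure ⟨j, Or.inr ⟨h, (gen_comm i j).trans (gen_of_lt h)⟩⟩

lemma gen_mem_strandSubgroup (i m : Fin n) : gen i m ∈ strandSubgroup n i := by
  rw [strandSubgroup_eq_closure]
  exact subset_closure ⟨m, rfl⟩

lemma commute_mk_of_commutatorElement_mem {u v : FreeGroup (BIdx n)}
    (h : ⁅u, v⁆ ∈ pureBraidRels n) :
    Commute (PresentedGroup.mk (pureBraidRels n) u) (PresentedGroup.mk (pureBraidRels n) v) := by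
  rw [← commutatorElement_eq_one_iff_commute, ← map_commutatorElement]
  exact (QuotientGroup.eq_one_iff _).2 (subset_normalClosure h)

variable {a b c d : Fin n}

lemma commute_gen_triple (hab : a < b) (hbc : b < c) :
    Commute (gen a b * gen a c * gen b c) (gen a b) ∧
    Commute (gen a b * gen a c * gen b c) (gen a c) ∧
    Commute (gen a b * gen a c * gen b c) (gen b c) := by
  have h₁ := commute_mk_of_commutatorElement_mem
    (Or.inl ⟨a, b, c, hab, hbc, Or.inl rfl⟩)
  have h₂ := commute_mk_of_commutatorElement_mem
    (Or.inl ⟨a, b, c, hab, hbc, Or.inr (Or.inl rfl)⟩)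
  have h₃ := commute_mk_of_commutatorElement_mem
    (Or.inl ⟨a, b, c, hab, hbc, Or.inr (Or.inr rfl)⟩)
  simp only [map_mul] at h₁ h₂ h₃
  rw [gen_of_lt hab, gen_of_lt (hab.trans hbc), gen_of_lt hbc]
  exact ⟨h₁, h₂, h₃⟩

lemma commute_gen_of_disjoint (hab : a < b) (hbc : b < c) (hcd : c < d) :
    Commute (gen a b) (gen c d) := by
  rw [gen_of_lt hab, gen_of_lt hcd]
  exact commute_mk_of_commutatorElement_mem (Or.inr ⟨a, b, c, d, hab, hbc, hcd, Or.inl rfl⟩)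

lemma commute_gen_of_nested (hab : a < b) (hbc : b < c) (hcd : c < d) :
    Commute (gen a d) (gen b c) := by
  rw [gen_of_lt ((hab.trans hbc).trans hcd), gen_of_lt hbc]
  exact commute_mk_of_commutatorElement_mem
    (Or.inr ⟨a, b, c, d, hab, hbc, hcd, Or.inr (Or.inl rfl)⟩)

lemma commute_gen_of_crossing (hab : a < b) (hbc : b < c) (hcd : c < d) :
    Commute (gen a c) ((gen a b)⁻¹ * gen b d * gen a b) := by
  have h := commute_mk_of_commutatorElement_mem
    (Or.inr ⟨a, b, c, d, hab, hbc, hcd, Or.inr (Or.inr rfl)⟩)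
  simp only [map_mul, map_inv] at h
  rw [gen_of_lt (hab.trans hbc), gen_of_lt hab, gen_of_lt (hbc.trans hcd)]
  exact h

variable {i k l m : Fin n}

lemma gen_mem_closure_mul_centralizer (hib : i ≠ b) (hic : i ≠ c) (hbc : b ≠ c) :
    gen b c ∈ (closure {gen i b, gen i c} : Set (PureBraid n)) *
      centralizer (closure {gen i b, gen i c} : Set (PureBraid n)) := by
  wlog hlt : b < c generalizing b c
  · rw [gen_comm b c, Set.pair_comm]
    exact this hic hib hbc.symm (by omega)
  rcases lt_or_gt_of_ne hib with hib' | hbi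
  · obtain ⟨h₁, h₂, h₃⟩ := commute_gen_triple hib' hlt
    exact (mem_closure_mul_centralizer_of_commute_mul h₁ h₂ h₃).2.2
  rcases lt_or_gt_of_ne hic with hic' | hci
  · obtain ⟨h₁, h₂, h₃⟩ := commute_gen_triple hbi hic'
    simpa only [gen_comm b i] using (mem_closure_mul_centralizer_of_commute_mul h₁ h₂ h₃).2.1
  · obtain ⟨h₁, h₂, h₃⟩ := commute_gen_triple hlt hci
    simpa only [gen_comm b i, gen_comm c i] using
      (mem_closure_mul_centralizer_of_commute_mul h₁ h₂ h₃).1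

lemma actsInnerly_gen_of_triple {F : Subgroup (PureBraid n)} {s : PureBraid n}
    (hb : gen i b ∈ F) (hc : gen i c ∈ F) (hs : s ∈ ({gen i b, gen i c} : Set (PureBraid n)))
    (hib : i ≠ b) (hic : i ≠ c) (hbc : b ≠ c) : ActsInnerly F (gen b c) s :=
  actsInnerly_of_mem_mul_centralizer ((closure_le F).2 (Set.pair_subset hb hc))
    (subset_closure hs) (gen_mem_closure_mul_centralizer hib hic hbc)

lemma commute_gen_of_not_crossing (hkl : k < l) (hik : i ≠ k) (hil : i ≠ l) (hmk : m ≠ k)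
    (hml : m ≠ l) (h : k < i ∧ i < l ↔ k < m ∧ m < l) : Commute (gen k l) (gen i m) := by
  wlog him : i < m generalizing i m
  · rcases (not_lt.1 him).lt_or_eq with hmi | rfl
    · rw [gen_comm i m]
      exact this hmk hml hik hil h.symm hmi
    · rw [gen_self]
      exact Commute.one_right _
  by_cases hmk' : m < k
  · exact (commute_gen_of_disjoint him hmk' hkl).symm
  by_cases hli : l < i
  · exact commute_gen_of_disjoint hkl hli him
  rcases lt_or_gt_of_ne hik with hik' | hki
  · exact (commute_gen_of_nested hik' hkl (by omega)).symm
  · exact commute_gen_of_nested hki him (by omega)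

/- The crossing relation makes conjugation by `x_ac` on `x_bd` equal to conjugation by
`⁅x_ac, x_ab⁆`, and the triple relation on `a, b, c` puts that commutator in `⟨x_ba, x_bc⟩`. -/
lemma actsInnerly_gen_ac_bd {F : Subgroup (PureBraid n)} (hab : a < b) (hbc : b < c)
    (hcd : c < d) (hK : ∀ v ∈ closure {gen b a, gen b c},
      v ∈ (F : Set (PureBraid n)) * centralizer {gen b d}) :
    ActsInnerly F (gen a c) (gen b d) := by
  have hu : gen a b ∈ closure {gen b a, gen b c} := subset_closure (by simp [gen_comm a b])
  obtain ⟨h₁, h₂⟩ := commutatorElement_mem_of_mem_mul_centralizer hu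
    (gen_mem_closure_mul_centralizer (by omega) (by omega) (by omega))
  exact actsInnerly_of_commute_conj (commute_gen_of_crossing hab hbc hcd) (hK _ h₁) (hK _ h₂)

lemma actsInnerly_gen_bd_ac {F : Subgroup (PureBraid n)} (hab : a < b) (hbc : b < c)
    (hcd : c < d) (hK : ∀ v ∈ closure {gen a b, gen a d},
      v ∈ (F : Set (PureBraid n)) * centralizer {gen a c}) :
    ActsInnerly F (gen b d) (gen a c) := by
  have hu : (gen a b)⁻¹ ∈ closure {gen a b, gen a d} := inv_mem (subset_closure (by simp))
  obtain ⟨h₁, h₂⟩ := commutatorElement_mem_of_mem_mul_centralizer hu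
    (gen_mem_closure_mul_centralizer (by omega) (by omega) (by omega))
  have h : Commute (gen b d) ((gen a b)⁻¹⁻¹ * gen a c * (gen a b)⁻¹) := by
    simpa [mul_assoc] using
      ((Commute.conj_iff (gen a b)).2 (commute_gen_of_crossing hab hbc hcd)).symm
  exact actsInnerly_of_commute_conj h (hK _ h₁) (hK _ h₂)

lemma closure_pair_le_strandSubgroup (i a b : Fin n) :
    closure {gen i a, gen i b} ≤ strandSubgroup n i :=
  (closure_le _).2 (Set.pair_subset (gen_mem_strandSubgroup i a) (gen_mem_strandSubgroup i b))

/- `x_ba` and `x_bc` act on each of `x_da, x_db, x_dc` through a triple or a commuting relation,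
so they lie in `innerStabilizer {x_da, x_db, x_dc}`; the crossing relation is not needed again. -/
lemma mem_strandSubgroup_mul_centralizer_of_crossing_ac (hab : a < b) (hbc : b < c)
    (hcd : c < d) (v : PureBraid n) (hv : v ∈ closure {gen b a, gen b c}) :
    v ∈ (strandSubgroup n d : Set (PureBraid n)) * centralizer {gen b d} := by
  set S : Set (PureBraid n) := {gen d a, gen d b, gen d c}
  have ha : gen d a ∈ closure S := subset_closure (by simp [S])
  have hb : gen d b ∈ closure S := subset_closure (by simp [S])
  have hc : gen d c ∈ closure S := subset_closure (by simp [S])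
  have hM : closure {gen b a, gen b c} ≤ innerStabilizer S := by
    refine (closure_le _).2 (Set.pair_subset ?_ ?_) <;> rintro _ (rfl | rfl | rfl)
    · exact actsInnerly_gen_of_triple hb ha (by simp) (by omega) (by omega) (by omega)
    · exact actsInnerly_gen_of_triple hb ha (by simp) (by omega) (by omega) (by omega)
    · rw [gen_comm b a, gen_comm d c]
      exact actsInnerly_of_commute (commute_gen_of_disjoint hab hbc hcd)
    · rw [gen_comm d a]
      exact actsInnerly_of_commute (commute_gen_of_nested hab hbc hcd).symm
    · exact actsInnerly_gen_of_triple hb hc (by simp) (by omega) (by omega) (by omega)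
    · exact actsInnerly_gen_of_triple hb hc (by simp) (by omega) (by omega) (by omega)
  have hSF : closure S ≤ strandSubgroup n d :=
    (closure_le _).2 (by rintro _ (rfl | rfl | rfl) <;> exact gen_mem_strandSubgroup _ _)
  rw [gen_comm b d]
  exact Set.mul_subset_mul_right hSF (hM hv _ (by simp [S])).1

lemma mem_strandSubgroup_mul_centralizer_of_crossing_bd (hab : a < b) (hbc : b < c)
    (hcd : c < d) (v : PureBraid n) (hv : v ∈ closure {gen a b, gen a d}) :
    v ∈ (strandSubgroup n c : Set (PureBraid n)) * centralizer {gen a c} := by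
  set S : Set (PureBraid n) := {gen c a, gen c b, gen c d}
  have ha : gen c a ∈ closure S := subset_closure (by simp [S])
  have hb : gen c b ∈ closure S := subset_closure (by simp [S])
  have hd : gen c d ∈ closure S := subset_closure (by simp [S])
  have hM : closure {gen a b, gen a d} ≤ innerStabilizer S := by
    refine (closure_le _).2 (Set.pair_subset ?_ ?_) <;> rintro _ (rfl | rfl | rfl)
    · exact actsInnerly_gen_of_triple ha hb (by simp) (by omega) (by omega) (by omega)
    · exact actsInnerly_gen_of_triple ha hb (by simp) (by omega) (by omega) (by omega)
    · exact actsInnerly_of_commute (commute_gen_of_disjoint hab hbc hcd)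
    · exact actsInnerly_gen_of_triple ha hd (by simp) (by omega) (by omega) (by omega)
    · rw [gen_comm c b]
      exact actsInnerly_of_commute (commute_gen_of_nested hab hbc hcd)
    · exact actsInnerly_gen_of_triple ha hd (by simp) (by omega) (by omega) (by omega)
  have hSF : closure S ≤ strandSubgroup n c :=
    (closure_le _).2 (by rintro _ (rfl | rfl | rfl) <;> exact gen_mem_strandSubgroup _ _)
  rw [gen_comm a c]
  exact Set.mul_subset_mul_right hSF (hM hv _ (by simp [S])).1

lemma actsInnerly_gen_of_crossing (hkl : k < l) (hik : i ≠ k) (hil : i ≠ l) (hmk : m ≠ k)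
    (hml : m ≠ l) (h : ¬(k < i ∧ i < l ↔ k < m ∧ m < l)) :
    ActsInnerly (strandSubgroup n i) (gen k l) (gen i m) := by
  have hpair (a b : Fin n) (v : PureBraid n) (hv : v ∈ closure {gen i a, gen i b}) :
      v ∈ (strandSubgroup n i : Set (PureBraid n)) * centralizer {gen i m} :=
    mul_mem_mul_centralizer_of_mem (closure_pair_le_strandSubgroup i a b hv)
  by_cases hi : k < i ∧ i < l
  · rcases lt_or_gt_of_ne hmk with hmk' | hkm
    · rw [gen_comm i m]
      exact actsInnerly_gen_bd_ac hmk' hi.1 hi.2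
        (mem_strandSubgroup_mul_centralizer_of_crossing_bd hmk' hi.1 hi.2)
    · exact actsInnerly_gen_ac_bd hi.1 hi.2 (by omega) (hpair k l)
  · rcases lt_or_gt_of_ne hik with hik' | hki
    · exact actsInnerly_gen_bd_ac hik' (by omega) (by omega) (hpair k l)
    · rw [gen_comm i m]
      exact actsInnerly_gen_ac_bd (by omega) (by omega) (by omega)
        (mem_strandSubgroup_mul_centralizer_of_crossing_ac (by omega) (by omega) (by omega))

lemma actsInnerly_gen (i : Fin n) (hkl : k < l) (m : Fin n) :
    ActsInnerly (strandSubgroup n i) (gen k l) (gen i m) := by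
  by_cases hikl : i = k ∨ i = l
  · refine actsInnerly_of_mem ?_
    rcases hikl with rfl | rfl
    · exact gen_mem_strandSubgroup i l
    · exact gen_comm k i ▸ gen_mem_strandSubgroup i k
  rw [not_or] at hikl
  by_cases hmkl : m = k ∨ m = l
  · exact actsInnerly_gen_of_triple (gen_mem_strandSubgroup i k) (gen_mem_strandSubgroup i l)
      (by rcases hmkl with rfl | rfl <;> simp) hikl.1 hikl.2 hkl.ne
  rw [not_or] at hmkl
  by_cases h : k < i ∧ i < l ↔ k < m ∧ m < l
  · exact actsInnerly_of_commute (commute_gen_of_not_crossing hkl hikl.1 hikl.2 hmkl.1 hmkl.2 h)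
  · exact actsInnerly_gen_of_crossing hkl hikl.1 hikl.2 hmkl.1 hmkl.2 h

end PureBraid

theorem pureBraid_commutator_strand_general (n : ℕ) (i : Fin n) :
    ⁅(⊤ : Subgroup (PureBraid n)), strandSubgroup n i⁆ =
      ⁅strandSubgroup n i, strandSubgroup n i⁆ := by
  rw [strandSubgroup_eq_closure]
  refine commutator_top_closure_eq_of_innerStabilizer_eq_top (eq_top_iff.2 fun g _ => ?_)
  refine PresentedGroup.generated_by _ _ (fun ⟨⟨k, l⟩, hkl⟩ => ?_) g
  rintro _ ⟨m, rfl⟩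
  rw [← strandSubgroup_eq_closure]
  have h := actsInnerly_gen i hkl m
  rw [gen_of_lt hkl] at h
  exact h

/-- for `n ≥ 3` and any strand `i`, one has
`(Kₙ, F_{n−1}) = (F_{n−1}, F_{n−1})` where `F_{n−1} = ⟨x_{i1}, …, x_{in}⟩ ≤ Kₙ`. -/
theorem pureBraid_commutator_strand (n : ℕ) (hn : 3 ≤ n) (i : Fin n) :
    ⁅(⊤ : Subgroup (PureBraid n)), strandSubgroup n i⁆ =
      ⁅strandSubgroup n i, strandSubgroup n i⁆ :=
  pureBraid_commutator_strand_general n i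
end
end
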